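/- For |a|,|b|,|c|,|d|,|t| < 1 and c ≠ d, the contour integral over |z₁| = 1 of z₁ (1−z₁²) / [(1−az₁)(1−bz₁)(1−cz₁)(1−dz₁)(z₁−c)(z₁−d)] · ∏_{j=2}^{n} (z_j−z₁)(1−z₁z_j)/[(z_j−tz₁)(1−tz₁z_j)] · dz₁/(2πi), with z₂,…,z_n fixed on the unit circle, equals c/[(1−ac)(1−bc)(1−cd)(c−d)] · ∏_{j=2}^{n} (z_j−c)(1−cz_j)/[(z_j−tc)(1−tcz_j)] + d/[(1−ad)(1−bd)(1−cd)(d−c)] · ∏_{j=2}^{n} (z_j−d)(1−dz_j)/[(z_j−td)(1−tdz_j)]. -/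

import Mathlib

/-!
The factors `1 - e z` (`e = a, b, c, d`), `zⱼ - t z` and `1 - t z zⱼ` do not vanish on the
closed unit disc, so the integrand is `g(z) / ((z - c)(z - d))` with `g` holomorphic on a
neighbourhood of the disc. Splitting `1 / ((z - c)(z - d))` into partial fractions and applying
the Cauchy integral formula at `c` and at `d` gives `g(c) / (c - d) + g(d) / (d - c)`; in `g(c)`
the factor `1 - c²` of the numerator cancels against `1 - c · c` in the denominator.
-/

open Finset Metric Complex Real Set

lemma sub_ne_zero_of_norm_lt {E : Type*} [SeminormedAddGroup E] {x y : E} (h : ‖y‖ < ‖x‖) :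
    x - y ≠ 0 :=
  sub_ne_zero.mpr fun hxy => h.ne' (congrArg norm hxy)

lemma norm_mul_lt_one_of_lt_of_le {R : Type*} [SeminormedRing R] {x y : R} (hx : ‖x‖ < 1)
    (hy : ‖y‖ ≤ 1) : ‖x * y‖ < 1 :=
  (norm_mul_le x y).trans_lt <|
    (mul_le_of_le_one_right (norm_nonneg x) hy).trans_lt hx

lemma one_sub_mul_ne_zero_of_norm_lt_one {R : Type*} [SeminormedRing R] [NormOneClass R]
    {x y : R} (hx : ‖x‖ < 1) (hy : ‖y‖ ≤ 1) : 1 - x * y ≠ 0 :=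
  sub_ne_zero_of_norm_lt (by rw [norm_one]; exact norm_mul_lt_one_of_lt_of_le hx hy)

lemma sub_ne_zero_of_mem_sphere_of_mem_ball {E : Type*} [SeminormedAddGroup E] {c w z : E}
    {R : ℝ} (hz : z ∈ sphere c R) (hw : w ∈ ball c R) : z - w ≠ 0 := by
  rw [sub_ne_zero]
  rintro rfl
  exact (mem_sphere.mp hz).not_lt (mem_ball.mp hw)

theorem DiffContOnCl.circleIntegral_inv_sub_mul_sub_smul {E : Type*} [NormedAddCommGroup E]
    [NormedSpace ℂ E] [CompleteSpace E] {R : ℝ} {c w₁ w₂ : ℂ} {g : ℂ → E}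
    (hg : DiffContOnCl ℂ g (ball c R)) (h₁ : w₁ ∈ ball c R) (h₂ : w₂ ∈ ball c R)
    (hne : w₁ ≠ w₂) :
    (∮ z in C(c, R), ((z - w₁) * (z - w₂))⁻¹ • g z)
      = (2 * π * I : ℂ) • ((w₁ - w₂)⁻¹ • g w₁ + (w₂ - w₁)⁻¹ • g w₂) := by
  have hR : 0 < R := pos_of_mem_ball h₁
  have hint : ∀ w ∈ ball c R, CircleIntegrable (fun z => (z - w)⁻¹ • g z) c R := by
    intro w hw
    refine ContinuousOn.circleIntegrable hR.le (ContinuousOn.smul ?_ ?_)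
    · exact ContinuousOn.inv₀ (by fun_prop) fun z hz =>
        sub_ne_zero_of_mem_sphere_of_mem_ball hz hw
    · exact hg.continuousOn.mono (sphere_subset_closedBall.trans (closure_ball c hR.ne').ge)
  have hpartial : EqOn (fun z => ((z - w₁) * (z - w₂))⁻¹ • g z)
      (fun z => (w₁ - w₂)⁻¹ • ((z - w₁)⁻¹ • g z - (z - w₂)⁻¹ • g z)) (sphere c R) := by
    intro z hz
    have hz₁ := sub_ne_zero_of_mem_sphere_of_mem_ball hz h₁
    have hz₂ := sub_ne_zero_of_mem_sphere_of_mem_ball hz h₂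
    have h₁₂ : w₁ - w₂ ≠ 0 := sub_ne_zero.mpr hne
    simp only [← sub_smul, smul_smul]
    congr 1
    field_simp
    ring
  rw [circleIntegral.integral_congr hR.le hpartial, circleIntegral.integral_smul,
    circleIntegral.integral_sub (hint w₁ h₁) (hint w₂ h₂), hg.circleIntegral_sub_inv_smul h₁,
    hg.circleIntegral_sub_inv_smul h₂, ← neg_sub w₁ w₂, inv_neg]
  module

noncomputable def regularPart {m : ℕ} (a b c d t : ℂ) (zs : Fin m → ℂ) (z : ℂ) : ℂ :=
  z * (1 - z ^ 2) / ((1 - a * z) * (1 - b * z) * (1 - c * z) * (1 - d * z)) *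
    ∏ j : Fin m, ((zs j - z) * (1 - z * zs j)) / ((zs j - t * z) * (1 - t * z * zs j))

lemma differentiableOn_regularPart {m : ℕ} {a b c d t : ℂ} (ha : ‖a‖ < 1) (hb : ‖b‖ < 1)
    (hc : ‖c‖ < 1) (hd : ‖d‖ < 1) (ht : ‖t‖ < 1) {zs : Fin m → ℂ} (hz : ∀ j, ‖zs j‖ = 1) :
    DifferentiableOn ℂ (regularPart a b c d t zs) (closedBall 0 1) := by
  intro z hz_mem
  have hz_le : ‖z‖ ≤ 1 := mem_closedBall_zero_iff.mp hz_mem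
  have htz : ‖t * z‖ < 1 := norm_mul_lt_one_of_lt_of_le ht hz_le
  have ha' := one_sub_mul_ne_zero_of_norm_lt_one ha hz_le
  have hb' := one_sub_mul_ne_zero_of_norm_lt_one hb hz_le
  have hc' := one_sub_mul_ne_zero_of_norm_lt_one hc hz_le
  have hd' := one_sub_mul_ne_zero_of_norm_lt_one hd hz_le
  have ht₁ : ∀ j, zs j - t * z ≠ 0 := fun j => sub_ne_zero_of_norm_lt (by rwa [hz j])
  have ht₂ : ∀ j, 1 - t * z * zs j ≠ 0 := fun j =>
    one_sub_mul_ne_zero_of_norm_lt_one htz (hz j).le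
  refine DifferentiableAt.differentiableWithinAt ?_
  unfold regularPart
  fun_prop (disch := simp [*])

lemma residue_sum_eq {K : Type*} [Field K] (a b c d p q : K) (hc : 1 - c * c ≠ 0)
    (hd : 1 - d * d ≠ 0) :
    (c - d)⁻¹ *
        (c * (1 - c ^ 2) / ((1 - a * c) * (1 - b * c) * (1 - c * c) * (1 - d * c)) * p)
      + (d - c)⁻¹ *
        (d * (1 - d ^ 2) / ((1 - a * d) * (1 - b * d) * (1 - c * d) * (1 - d * d)) * q)
    = c / ((1 - a * c) * (1 - b * c) * (1 - c * d) * (c - d)) * p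
      + d / ((1 - a * d) * (1 - b * d) * (1 - c * d) * (d - c)) * q := by
  have hc' : (1 - c ^ 2) * (1 - c * c)⁻¹ = 1 := by rw [sq]; exact mul_inv_cancel₀ hc
  have hd' : (1 - d ^ 2) * (1 - d * d)⁻¹ = 1 := by rw [sq]; exact mul_inv_cancel₀ hd
  simp only [div_eq_mul_inv, mul_inv, mul_comm d c]
  linear_combination c * p * (1 - a * c)⁻¹ * (1 - b * c)⁻¹ * (1 - c * d)⁻¹ * (c - d)⁻¹ * hc'
    + d * q * (1 - a * d)⁻¹ * (1 - b * d)⁻¹ * (1 - c * d)⁻¹ * (d - c)⁻¹ * hd'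

/-- The single-variable residue computation underlying the recursion for the `q = 0`
nonsymmetric Koornwinder constant term: integrating out `z₁` over the unit circle,
with `z₂, …, z_n` fixed on the unit circle, picks up the residues at the simple poles
`z₁ = c` and `z₁ = d`. -/
theorem residue_step (m : ℕ) (a b c d t : ℂ)
    (ha : ‖a‖ < 1) (hb : ‖b‖ < 1) (hc : ‖c‖ < 1) (hd : ‖d‖ < 1) (ht : ‖t‖ < 1)
    (hcd : c ≠ d) (zs : Fin m → ℂ) (hz : ∀ j, ‖zs j‖ = 1) :
    (2 * Real.pi * Complex.I)⁻¹ *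
      (∮ z in C((0 : ℂ), 1),
        z * (1 - z ^ 2) /
            ((1 - a * z) * (1 - b * z) * (1 - c * z) * (1 - d * z) * (z - c) * (z - d)) *
          ∏ j : Fin m,
            ((zs j - z) * (1 - z * zs j)) / ((zs j - t * z) * (1 - t * z * zs j)))
    = c / ((1 - a * c) * (1 - b * c) * (1 - c * d) * (c - d)) *
        (∏ j : Fin m, ((zs j - c) * (1 - c * zs j)) / ((zs j - t * c) * (1 - t * c * zs j)))
      + d / ((1 - a * d) * (1 - b * d) * (1 - c * d) * (d - c)) *
        ∏ j : Fin m, ((zs j - d) * (1 - d * zs j)) / ((zs j - t * d) * (1 - t * d * zs j)) := by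
  have hg : DiffContOnCl ℂ (regularPart a b c d t zs) (ball 0 1) :=
    ((differentiableOn_regularPart ha hb hc hd ht hz).mono
      closure_ball_subset_closedBall).diffContOnCl
  have hcc := one_sub_mul_ne_zero_of_norm_lt_one hc hc.le
  have hdd := one_sub_mul_ne_zero_of_norm_lt_one hd hd.le
  calc _ = (2 * π * I)⁻¹ *
          ∮ z in C(0, 1), ((z - c) * (z - d))⁻¹ • regularPart a b c d t zs z := by
        congr 2 with z
        simp only [regularPart, smul_eq_mul, div_eq_mul_inv, mul_inv]
        ring
    _ = (c - d)⁻¹ * regularPart a b c d t zs c + (d - c)⁻¹ * regularPart a b c d t zs d := by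
        rw [hg.circleIntegral_inv_sub_mul_sub_smul (mem_ball_zero_iff.mpr hc)
          (mem_ball_zero_iff.mpr hd) hcd, smul_eq_mul, inv_mul_cancel_left₀ two_pi_I_ne_zero]
        rfl
    _ = _ := residue_sum_eq a b c d _ _ hcc hdd
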